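/- arXiv:2302.12663 — 3 statements merged into one kernel-verified Lean document; each statement's English description precedes it below -/
import Mathlib

section
/- Fix a positive integer n. Every involution in PSL(2,ℝ) of the form A·w_n with A ∈ Γ₀(n), where w_n = ((0, −1/√n),(√n, 0)) is the Fricke involution, can be written as ((√n·d, −s/√n),(√n·r, −√n·d)) for integers r, d, s with r·s − n·d² = 1. Conversely every such matrix defines an involution in the coset Γ₀(n)·w_n. -/
open Matrix Real

/-- The Fricke involution `w_n` as a real 2×2 matrix. -/
noncomputable def frickeW (n : ℕ) : Matrix (Fin 2) (Fin 2) ℝ :=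
  !![0, -1 / Real.sqrt n; Real.sqrt n, 0]

/-- A real matrix represents an element of the Hecke congruence subgroup `Γ₀(n)`:
it is integral, of determinant one, with lower-left entry divisible by `n`. -/
def InGamma0 (n : ℕ) (A : Matrix (Fin 2) (Fin 2) ℝ) : Prop :=
  ∃ a b c d : ℤ, a * d - b * c = 1 ∧ (n : ℤ) ∣ c ∧
    A = !![(a : ℝ), (b : ℝ); (c : ℝ), (d : ℝ)]

/-- The matrix `((√n d, −s/√n),(√n r, −√n d))` associated to `(r,d,s)`. -/
noncomputable def frickeInvolMat (n : ℕ) (r d s : ℤ) : Matrix (Fin 2) (Fin 2) ℝ :=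
  !![Real.sqrt n * d, -(s : ℝ) / Real.sqrt n; Real.sqrt n * r, -(Real.sqrt n * d)]

/-- Every involution in `PSL(2,ℝ)` lying in the coset `Γ₀(n)·w_n` has the form
`((√n d, −s/√n),(√n r, −√n d))` with `r s − n d² = 1`, and conversely every such
matrix defines an involution in the coset `Γ₀(n)·w_n`. -/
theorem involutions_in_Fricke_coset (n : ℕ) (hn : 0 < n) :
    (∀ M : Matrix (Fin 2) (Fin 2) ℝ,
      (∃ A, InGamma0 n A ∧ M = A * frickeW n) →
      (M * M = 1 ∨ M * M = -1) → (M ≠ 1 ∧ M ≠ -1) →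
      ∃ r d s : ℤ, r * s - (n : ℤ) * d ^ 2 = 1 ∧
        (M = frickeInvolMat n r d s ∨ M = -frickeInvolMat n r d s)) ∧
    (∀ r d s : ℤ, r * s - (n : ℤ) * d ^ 2 = 1 →
      (∃ A, InGamma0 n A ∧ frickeInvolMat n r d s = A * frickeW n) ∧
      (frickeInvolMat n r d s * frickeInvolMat n r d s = 1 ∨
        frickeInvolMat n r d s * frickeInvolMat n r d s = -1) ∧
      frickeInvolMat n r d s ≠ 1 ∧ frickeInvolMat n r d s ≠ -1) := by
  have hn' : (0:ℝ) < n := by exact_mod_cast hn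
  have hs0 : (0:ℝ) < Real.sqrt n := Real.sqrt_pos.2 hn'
  set q : ℝ := Real.sqrt n with hq
  have hsne : q ≠ 0 := ne_of_gt hs0
  have hs2 : q * q = n := Real.mul_self_sqrt (le_of_lt hn')
  have hone : (1 : Matrix (Fin 2) (Fin 2) ℝ) = !![(1:ℝ),0;0,1] := by
    ext i j; fin_cases i <;> fin_cases j <;> simp
  have hmone : (-1 : Matrix (Fin 2) (Fin 2) ℝ) = !![(-1:ℝ),0;0,-1] := by
    ext i j; fin_cases i <;> fin_cases j <;> simp
  have hWform : ∀ a b c d : ℝ,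
      (!![a, b; (n:ℝ)*c, d] : Matrix (Fin 2) (Fin 2) ℝ) * frickeW n
        = !![q * b, -a/q; q * d, -(q * c)] := by
    intro a b c d
    rw [frickeW, ← hq, Matrix.mul_fin_two,
      show a*0 + b*q = q*b by ring,
      show a*(-1/q) + b*0 = -a/q by ring,
      show ((n:ℝ)*c)*0 + d*q = q*d by ring,
      show ((n:ℝ)*c)*(-1/q) + d*0 = -(q*c) by rw [← hs2]; field_simp; ring]
  have hMMform : ∀ a b c d : ℝ,
      (!![q * b, -a/q; q * d, -(q * c)] : Matrix (Fin 2) (Fin 2) ℝ) *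
        !![q * b, -a/q; q * d, -(q * c)]
        = !![(n:ℝ)*b*b - a*d, a*c - a*b; (n:ℝ)*d*b - (n:ℝ)*c*d, (n:ℝ)*c*c - a*d] := by
    intro a b c d
    rw [Matrix.mul_fin_two,
      show q*b*(q*b) + (-a/q)*(q*d) = (n:ℝ)*b*b - a*d by rw [← hs2]; field_simp; ring,
      show q*b*(-a/q) + (-a/q)*(-(q*c)) = a*c - a*b by field_simp; ring,
      show q*d*(q*b) + (-(q*c))*(q*d) = (n:ℝ)*d*b - (n:ℝ)*c*d by rw [← hs2]; ring,
      show q*d*(-a/q) + (-(q*c))*(-(q*c)) = (n:ℝ)*c*c - a*d by rw [← hs2]; field_simp; ring]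
  constructor
  · rintro M ⟨A, ⟨a, b, c, d, hdet, ⟨e, rfl⟩, rfl⟩, rfl⟩ hsq ⟨h1, hm1⟩
    rw [show ((↑n*e:ℤ):ℝ) = (n:ℝ)*(e:ℝ) by push_cast; ring] at hsq h1 hm1 ⊢
    rw [hWform a b e d] at hsq h1 hm1 ⊢
    rw [hMMform a b e d] at hsq
    have hnpos : (0:ℤ) < n := by exact_mod_cast hn
    rcases hsq with hsq | hsq
    · -- M² = 1 : leads to contradiction with M ≠ ±1
      exfalso
      rw [hone] at hsq
      have r00 : (n:ℝ)*b*b - a*d = 1 := by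
        have := congrFun (congrFun hsq 0) 0; simpa using this
      have r01 : (a:ℝ)*e - a*b = 0 := by
        have := congrFun (congrFun hsq 0) 1; simpa using this
      have r10 : (n:ℝ)*d*b - (n:ℝ)*e*d = 0 := by
        have := congrFun (congrFun hsq 1) 0; simpa using this
      have i00 : (n:ℤ)*b*b - a*d = 1 := by exact_mod_cast r00
      have i01 : (a:ℤ)*e - a*b = 0 := by exact_mod_cast r01
      have i10 : (n:ℤ)*d*b - (n:ℤ)*e*d = 0 := by exact_mod_cast r10
      have hab : a * (e - b) = 0 := by linarith [i01, mul_sub a e b]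
      rcases mul_eq_zero.1 hab with ha | hbe
      · -- a = 0
        subst ha
        have hnb : (n:ℤ)*(b*b) = 1 := by linear_combination i00
        have hdet' : -(b*((n:ℤ)*e)) = 1 := by linear_combination hdet
        have hn1 : (n:ℤ) = 1 :=
          Int.eq_one_of_mul_eq_one_right (by positivity) hnb
        have hb2 : b*b = 1 := by rwa [hn1, one_mul] at hnb
        rw [hn1, one_mul] at hdet'
        have heb : e = -b := by
          rcases mul_self_eq_one_iff.1 hb2 with hb | hb <;> subst hb <;> omega
        subst heb
        have hd0 : d = 0 := by
          rw [hn1] at i10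
          have h2 : (2:ℤ)*(d*b) = 0 := by linear_combination i10
          rcases mul_self_eq_one_iff.1 hb2 with hb | hb <;> subst hb <;> omega
        have hq1 : q = 1 := by
          rw [hq, show ((n:ℕ):ℝ) = 1 by exact_mod_cast hn1]; exact Real.sqrt_one
        rcases mul_self_eq_one_iff.1 hb2 with hb | hb
        · apply h1
          rw [hone, hq1, hb, hd0]
          norm_num
        · apply hm1
          rw [hmone, hq1, hb, hd0]
          norm_num
      · -- e = b : then n b² - a d = 1 and a d - n b² = 1, contradiction
        have heb : e = b := by omega
        have hdet' : a*d - (n:ℤ)*b*b = 1 := by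
          rw [heb] at hdet; linear_combination hdet
        linarith [i00, hdet']
    · -- M² = -1 : the main case
      rw [hmone] at hsq
      have r00 : (n:ℝ)*b*b - a*d = -1 := by
        have := congrFun (congrFun hsq 0) 0; simpa using this
      have r01 : (a:ℝ)*e - a*b = 0 := by
        have := congrFun (congrFun hsq 0) 1; simpa using this
      have i00 : (n:ℤ)*b*b - a*d = -1 := by exact_mod_cast r00
      have i01 : (a:ℤ)*e - a*b = 0 := by exact_mod_cast r01
      have hab : a * (e - b) = 0 := by linarith [i01, mul_sub a e b]
      have heb : e = b := by
        rcases mul_eq_zero.1 hab with ha | hbe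
        · exfalso
          subst ha
          have hnb : (n:ℤ)*(b*b) = -1 := by linear_combination i00
          nlinarith [mul_nonneg hnpos.le (mul_self_nonneg b), hnb]
        · omega
      refine ⟨d, b, a, ?_, Or.inl ?_⟩
      · rw [heb] at hdet; linear_combination hdet
      · rw [heb, frickeInvolMat, ← hq]
  · rintro r d s h
    have hc2 : (r:ℝ) * s - (n:ℝ) * ((d:ℝ)*d) = 1 := by
      have h' : ((r * s - (n:ℤ) * d ^ 2 : ℤ) : ℝ) = 1 := by rw [h]; norm_num
      push_cast at h'; linear_combination h' 
    have hform : frickeInvolMat n r d s = !![q * (d:ℝ), -(s:ℝ)/q; q * r, -(q * (d:ℝ))] := by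
      rw [frickeInvolMat, ← hq]
    refine ⟨⟨!![(s:ℝ), d; (n:ℝ)*(d:ℝ), r],
      ⟨s, d, n*d, r, by linear_combination h, ⟨d, rfl⟩, by push_cast; rfl⟩, ?_⟩, ?_, ?_, ?_⟩
    · rw [hform, ← hWform (s:ℝ) d d r]
    · right
      rw [hform, hMMform (s:ℝ) d d r, hmone,
        show (n:ℝ)*d*d - s*r = -1 by linear_combination -hc2,
        show (s:ℝ)*d - s*d = 0 by ring,
        show (n:ℝ)*r*d - (n:ℝ)*d*r = 0 by ring]
    · intro heq
      rw [hform, hone] at heq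
      have t00 : q * (d:ℝ) = 1 := by
        have := congrFun (congrFun heq 0) 0; simpa using this
      have t11 : -(q * (d:ℝ)) = 1 := by
        have := congrFun (congrFun heq 1) 1; simpa using this
      linarith
    · intro heq
      rw [hform, hmone] at heq
      have t00 : q * (d:ℝ) = -1 := by
        have := congrFun (congrFun heq 0) 0; simpa using this
      have t11 : -(q * (d:ℝ)) = -1 := by
        have := congrFun (congrFun heq 1) 1; simpa using this
      linarith
end

section
/- Let n ≥ 2 and let g = ((α,β),(γ,δ)) with αδ − βγ = 1 induce the isometry M_g (as above) on the lattice N = ℤ³ with Mukai pairing of degree 2n. Then M_g acts on the discriminant group N*/N ≅ ℤ/2n (generated by (0,1/(2n),0)) by multiplication by αδ + βγ = 2αδ − 1 = 2βγ + 1 mod 2n. If γ ≡ 0 mod n then this action is the identity; if instead g lies in the coset Γ₀(n)·w_n (i.e., g = h·w_n with h ∈ Γ₀(n)), then αδ ≡ 0 mod n and the action is −1. -/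
open Matrix

/-- A rational vector is integral. -/
def IsIntVec (x : Fin 3 → ℚ) : Prop := ∀ i, ∃ k : ℤ, x i = k

/-- The matrix `M_g` over `ℚ` induced by `g = ((α,β),(γ,δ))`. -/
def MgQ (n : ℕ) (α β γ δ : ℤ) : Matrix (Fin 3) (Fin 3) ℚ :=
  !![(δ : ℚ) ^ 2, 2 * γ * δ, (γ : ℚ) ^ 2 / n;
     (β : ℚ) * δ, (α : ℚ) * δ + β * γ, (α : ℚ) * γ / n;
     (n : ℚ) * β ^ 2, 2 * n * α * β, (α : ℚ) ^ 2]

/-- The matrix `M_g` over `ℚ` induced by the coset element `g = h·w_n`,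
where `h = ((a,b),(c,d)) ∈ Γ₀(n)`, so that `g = ((b√n, −a/√n),(d√n, −c/√n))`. -/
def MgCosetQ (n : ℕ) (a b c d : ℤ) : Matrix (Fin 3) (Fin 3) ℚ :=
  !![(c : ℚ) ^ 2 / n, -(2 * c * d), (d : ℚ) ^ 2;
     (a : ℚ) * c / n, -((a : ℚ) * d + b * c), (b : ℚ) * d;
     (a : ℚ) ^ 2, -(2 * n * a * b), (n : ℚ) * b ^ 2]

/-- The generator `(0, 1/(2n), 0)` of the discriminant group. -/
def discGen (n : ℕ) : Fin 3 → ℚ := ![(0 : ℚ), 1 / (2 * (n : ℚ)), 0]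

/-- `M_g` acts on the discriminant group `N*/N ≅ ℤ/2n` by multiplication by
`αδ + βγ = 2αδ − 1 = 2βγ + 1`; if `n ∣ γ` this action is the identity, and for
an element of the coset `Γ₀(n)·w_n` one has `n ∣ αδ` and the action is `−1`. -/
theorem Mg_action_on_discriminant (n : ℕ) (hn : 2 ≤ n) :
    (∀ α β γ δ : ℤ, α * δ - β * γ = 1 →
      (n : ℤ) ∣ γ * γ → (n : ℤ) ∣ α * γ →
      α * δ + β * γ = 2 * (α * δ) - 1 ∧
      α * δ + β * γ = 2 * (β * γ) + 1 ∧
      IsIntVec ((MgQ n α β γ δ).mulVec (discGen n) -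
        ((α * δ + β * γ : ℤ) : ℚ) • discGen n) ∧
      ((n : ℤ) ∣ γ →
        IsIntVec ((MgQ n α β γ δ).mulVec (discGen n) - discGen n))) ∧
    (∀ a b c d : ℤ, a * d - b * c = 1 → (n : ℤ) ∣ c →
      (n : ℤ) ∣ (-(b * c)) ∧
      IsIntVec ((MgCosetQ n a b c d).mulVec (discGen n) + discGen n)) := by
  have hn0 : (n : ℚ) ≠ 0 := by positivity
  constructor
  · intro α β γ δ hdet hγγ hαγ
    -- first show n ∣ γ
    have hγ : (n : ℤ) ∣ γ := by
      have : γ = δ * (α * γ) - β * (γ * γ) := by linear_combination -γ * hdet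
      rw [this]
      exact dvd_sub (Dvd.dvd.mul_left hαγ δ) (Dvd.dvd.mul_left hγγ β)
    obtain ⟨k, hk⟩ := hγ
    refine ⟨by omega, by omega, ?_, ?_⟩
    · intro i
      fin_cases i
      · refine ⟨k * δ, ?_⟩
        simp [MgQ, discGen, Matrix.mulVec, dotProduct, Fin.sum_univ_succ]
        have hkq : (γ : ℚ) = n * k := by exact_mod_cast hk
        field_simp
        linear_combination (δ : ℚ) * hkq
      · refine ⟨0, ?_⟩
        simp [MgQ, discGen, Matrix.mulVec, dotProduct, Fin.sum_univ_succ]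
        push_cast
        ring
      · refine ⟨α * β, ?_⟩
        simp [MgQ, discGen, Matrix.mulVec, dotProduct, Fin.sum_univ_succ]
        field_simp
    · intro _ i
      fin_cases i
      · refine ⟨k * δ, ?_⟩
        simp [MgQ, discGen, Matrix.mulVec, dotProduct, Fin.sum_univ_succ]
        have hkq : (γ : ℚ) = n * k := by exact_mod_cast hk
        field_simp
        linear_combination (δ : ℚ) * hkq
      · refine ⟨β * k, ?_⟩
        simp [MgQ, discGen, Matrix.mulVec, dotProduct, Fin.sum_univ_succ]
        have hd : (α : ℚ) * δ - β * γ = 1 := by exact_mod_cast hdet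
        have hkq : (γ : ℚ) = n * k := by exact_mod_cast hk
        field_simp
        linear_combination hd + (2 * (β:ℚ)) * hkq
      · refine ⟨α * β, ?_⟩
        simp [MgQ, discGen, Matrix.mulVec, dotProduct, Fin.sum_univ_succ]
        field_simp
  · intro a b c d hdet hc
    obtain ⟨k, hk⟩ := hc
    refine ⟨⟨-(b * k), by rw [hk]; ring⟩, ?_⟩
    intro i
    fin_cases i
    · refine ⟨-(k * d), ?_⟩
      simp [MgCosetQ, discGen, Matrix.mulVec, dotProduct, Fin.sum_univ_succ]
      have : (c : ℚ) = n * k := by exact_mod_cast hk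
      field_simp
      linear_combination (d : ℚ) * this
    · refine ⟨-(b * k), ?_⟩
      simp [MgCosetQ, discGen, Matrix.mulVec, dotProduct, Fin.sum_univ_succ]
      have hd : (a : ℚ) * d - b * c = 1 := by exact_mod_cast hdet
      have hcq : (c : ℚ) = n * k := by exact_mod_cast hk
      field_simp
      linear_combination (-1 : ℚ) * hd + (-2 * (b:ℚ)) * hcq
    · refine ⟨-(a * b), ?_⟩
      simp [MgCosetQ, discGen, Matrix.mulVec, dotProduct, Fin.sum_univ_succ]
      field_simp
end

section
/- Let D be a triangulated category (or abstractly: let G be a group with a central element t of infinite order, playing the role of the shift [1], and write Z = ⟨t²⟩). Let φ ∈ G/Z be an involution that is not the image of any power of t. Then exactly one of φ, φ·t̄ (where t̄ is the image of t) lifts to an element Φ ∈ G with Φ² = 1 and Φ ≠ 1; moreover Φ is the unique finite-order element among all lifts of φ and of φ·t̄. -/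
private lemma aux_finord {G : Type*} [Group G] {g : G} {z : ℤ} (hz : z ≠ 0)
    (h : g ^ z = 1) : IsOfFinOrder g := by
  rw [isOfFinOrder_iff_pow_eq_one]
  refine ⟨z.natAbs, Int.natAbs_pos.2 hz, ?_⟩
  rcases Int.natAbs_eq z with h' | h'
  · rw [← zpow_natCast, ← h', h]
  · rw [← zpow_natCast, ← neg_neg (z.natAbs : ℤ), ← h', zpow_neg, h, inv_one]

private lemma aux_zpow_inf {G : Type*} [Group G] {t : G} (htinf : ¬ IsOfFinOrder t)
    {j : ℤ} (hj : j ≠ 0) : ¬ IsOfFinOrder (t ^ j) := by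
  intro h
  obtain ⟨n, hn, hn1⟩ := isOfFinOrder_iff_pow_eq_one.mp h
  refine htinf (aux_finord (z := j * n) ?_ ?_)
  · exact mul_ne_zero hj (by exact_mod_cast hn.ne')
  · rw [zpow_mul, zpow_natCast, hn1]

/-- Let `t` be a central element of infinite order in a group `G` (modelling the shift
functor `[1]` in `Aut(D)`), and `Z = ⟨t²⟩`. If `φ ∈ G/Z` is an involution which is
not the image of any power of `t`, then exactly one of `φ`, `φ·t̄` lifts to an
involution `Φ ∈ G`, and `Φ` is the unique finite-order element among all lifts of
`φ` and of `φ·t̄`. -/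
theorem lift_involution_mod_double_shift
    {G : Type*} [Group G] (t : G)
    (ht : t ∈ Subgroup.center G) (htinf : ¬ IsOfFinOrder t)
    [(Subgroup.zpowers (t ^ 2)).Normal]
    (φ : G ⧸ Subgroup.zpowers (t ^ 2))
    (hinv : φ ^ 2 = 1 ∧ φ ≠ 1)
    (hnotshift : ∀ k : ℤ, φ ≠ QuotientGroup.mk (t ^ k)) :
    ∃ Φ : G, Φ ^ 2 = 1 ∧ Φ ≠ 1 ∧
      ((QuotientGroup.mk Φ = φ ∧ QuotientGroup.mk Φ ≠ φ * QuotientGroup.mk t) ∨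
       (QuotientGroup.mk Φ = φ * QuotientGroup.mk t ∧ QuotientGroup.mk Φ ≠ φ)) ∧
      (∀ Ψ : G, IsOfFinOrder Ψ →
        ((QuotientGroup.mk Ψ : G ⧸ Subgroup.zpowers (t ^ 2)) = φ ∨
          QuotientGroup.mk Ψ = φ * QuotientGroup.mk t) → Ψ = Φ) := by
  obtain ⟨hφ2, hφ1⟩ := hinv
  have hC : ∀ g : G, Commute g t := fun g => Subgroup.mem_center_iff.mp ht g
  -- t̄² = 1 in quotient
  have ht2 : (QuotientGroup.mk t : G ⧸ Subgroup.zpowers (t ^ 2)) ^ 2 = 1 := by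
    rw [← QuotientGroup.mk_pow, QuotientGroup.eq_one_iff]
    exact Subgroup.mem_zpowers _
  -- t̄ ≠ 1
  have htne : (QuotientGroup.mk t : G ⧸ Subgroup.zpowers (t ^ 2)) ≠ 1 := by
    intro h
    rw [QuotientGroup.eq_one_iff, Subgroup.mem_zpowers_iff] at h
    obtain ⟨k, hk⟩ := h
    refine htinf (aux_finord (z := 2 * k - 1) (by omega) ?_)
    have h2 : (t ^ 2) ^ k = t ^ (2 * k : ℤ) := by group
    rw [h2] at hk
    rw [zpow_sub, hk, zpow_one, mul_inv_cancel]
  -- φ ≠ φ * t̄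
  have hφt : φ ≠ φ * QuotientGroup.mk t := by
    intro h
    exact htne (mul_left_cancel (a := φ) (by rw [mul_one]; exact h)).symm
  obtain ⟨Ψ, hΨ⟩ := QuotientGroup.mk_surjective φ
  have hΨ2 : Ψ ^ 2 ∈ Subgroup.zpowers (t ^ 2) := by
    rw [← QuotientGroup.eq_one_iff, QuotientGroup.mk_pow, hΨ, hφ2]
  rw [Subgroup.mem_zpowers_iff] at hΨ2
  obtain ⟨m, hm⟩ := hΨ2
  set Φ := Ψ * t ^ (-m) with hΦdef
  -- Φ² = 1
  have hΦ2 : Φ ^ 2 = 1 := by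
    have h1 : Φ ^ 2 = Ψ ^ 2 * (t ^ (-m)) ^ 2 := ((hC Ψ).zpow_right (-m)).mul_pow 2
    rw [h1, ← hm]
    group
  -- mk Φ = φ * mk (t ^ (-m))
  have hmkΦ : (QuotientGroup.mk Φ : G ⧸ Subgroup.zpowers (t ^ 2))
      = φ * QuotientGroup.mk (t ^ (-m)) := by
    rw [hΦdef, QuotientGroup.mk_mul, hΨ]
  -- the parity case split
  have hcases : (QuotientGroup.mk Φ : G ⧸ Subgroup.zpowers (t ^ 2)) = φ ∨
      (QuotientGroup.mk Φ : G ⧸ Subgroup.zpowers (t ^ 2)) = φ * QuotientGroup.mk t := by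
    rcases Int.even_or_odd m with ⟨j, hj⟩ | ⟨j, hj⟩
    · left
      rw [hmkΦ]
      have : (QuotientGroup.mk (t ^ (-m)) : G ⧸ Subgroup.zpowers (t ^ 2)) = 1 := by
        rw [QuotientGroup.eq_one_iff, Subgroup.mem_zpowers_iff]
        exact ⟨-j, by rw [hj]; group⟩
      rw [this, mul_one]
    · right
      rw [hmkΦ]
      have : (QuotientGroup.mk (t ^ (-m)) : G ⧸ Subgroup.zpowers (t ^ 2))
          = QuotientGroup.mk t := by
        rw [QuotientGroup.eq]
        rw [Subgroup.mem_zpowers_iff]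
        exact ⟨j + 1, by rw [hj]; group⟩
      rw [this]
  -- Φ ≠ 1
  have hΦ1 : Φ ≠ 1 := by
    intro h
    rcases hcases with hc | hc
    · rw [h, QuotientGroup.mk_one] at hc; exact hφ1 hc.symm
    · rw [h, QuotientGroup.mk_one] at hc
      apply hnotshift (-1)
      have : φ = (QuotientGroup.mk t : G ⧸ Subgroup.zpowers (t ^ 2))⁻¹ :=
        eq_inv_of_mul_eq_one_left hc.symm
      rw [this, ← QuotientGroup.mk_inv, ← zpow_neg_one]
  refine ⟨Φ, hΦ2, hΦ1, ?_, ?_⟩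
  · rcases hcases with hc | hc
    · exact Or.inl ⟨hc, by rw [hc]; exact hφt⟩
    · refine Or.inr ⟨hc, ?_⟩
      rw [hc]; exact fun h => hφt h.symm
  · -- uniqueness
    intro Ψ' hfin hmk
    -- mk Ψ' = mk Φ or mk Ψ' = mk Φ * mk t
    have key : (QuotientGroup.mk Ψ' : G ⧸ Subgroup.zpowers (t ^ 2)) = QuotientGroup.mk Φ ∨
        (QuotientGroup.mk Ψ' : G ⧸ Subgroup.zpowers (t ^ 2))
          = QuotientGroup.mk Φ * QuotientGroup.mk t := by
      rcases hcases with hc | hc <;> rcases hmk with hm' | hm'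
      · exact Or.inl (hm'.trans hc.symm)
      · exact Or.inr (by rw [hm', hc])
      · refine Or.inr ?_
        rw [hm', hc, mul_assoc, ← sq, ht2, mul_one]
      · exact Or.inl (hm'.trans hc.symm)
    -- hence Ψ' = Φ * t ^ j for some j
    have hj : ∃ j : ℤ, Ψ' = Φ * t ^ j := by
      rcases key with hk | hk
      · rw [eq_comm, QuotientGroup.eq, Subgroup.mem_zpowers_iff] at hk
        obtain ⟨k, hk⟩ := hk
        refine ⟨2 * k, ?_⟩
        have : (t ^ 2) ^ k = t ^ (2 * k : ℤ) := by group
        rw [this] at hk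
        rw [hk, mul_inv_cancel_left]
      · rw [← QuotientGroup.mk_mul, eq_comm, QuotientGroup.eq, Subgroup.mem_zpowers_iff] at hk
        obtain ⟨k, hk⟩ := hk
        refine ⟨2 * k + 1, ?_⟩
        have h2 : (t ^ 2) ^ k = t ^ (2 * k : ℤ) := by group
        rw [h2] at hk
        have : Ψ' = Φ * t * t ^ (2 * k : ℤ) := by rw [hk, mul_inv_cancel_left]
        rw [this, mul_assoc]
        congr 1
        group
    obtain ⟨j, hj⟩ := hj
    rcases eq_or_ne j 0 with h0 | h0
    · rw [hj, h0]; group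
    · exfalso
      apply aux_zpow_inf htinf (j := 2 * j) (by omega)
      have h1 : Ψ' ^ 2 = Φ ^ 2 * (t ^ j) ^ 2 := by rw [hj]; exact ((hC Φ).zpow_right j).mul_pow 2
      rw [hΦ2, one_mul] at h1
      have h2 : (t ^ j) ^ 2 = t ^ (2 * j : ℤ) := by group
      rw [h2] at h1
      rw [← h1]
      exact hfin.pow
end
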